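/- Shape of unfolded boxes: Let α be a program, ℓ ∈ TP(α) a test profile, and δ̄ ∈ P^ℓ(α). Then: (a) if α is atomic, say α = a, then δ̄ = a; (b) if α = β* for some β, then either δ̄ is empty or δ̄ has the form a δ₁ ⋯ δₙ β* with n ≥ 0 where a is atomic and each δᵢ is a shallow subprogram of α distinct from α; (c) otherwise, either δ̄ is empty or δ̄ has the form a δ₁ ⋯ δₙ with a atomic and each δᵢ a shallow subprogram of α distinct from α. -/

import Mathlib

mutual
inductive Formula : Type
  | bot : Formula
  | atom : ℕ → Formula
  | and : Formula → Formula → Formula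
  | neg : Formula → Formula
  | box : Program → Formula → Formula
inductive Program : Type
  | atom : ℕ → Program
  | test : Formula → Program
  | union : Program → Program → Program
  | comp : Program → Program → Program
  | star : Program → Program
end

structure KripkeModel (W : Type) : Type where
  rel : ℕ → W → W → Prop
  val : W → ℕ → Prop

mutual
def evaluate {W : Type} (M : KripkeModel W) : W → Formula → Prop
  | _, .bot => False
  | w, .atom p => M.val w p
  | w, .and φ ψ => evaluate M w φ ∧ evaluate M w ψ
  | w, .neg φ => ¬ evaluate M w φ
  | w, .box α φ => ∀ v, relate M α w v → evaluate M v φ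
def relate {W : Type} (M : KripkeModel W) : Program → W → W → Prop
  | .atom a, w, v => M.rel a w v
  | .test τ, w, v => w = v ∧ evaluate M w τ
  | .union α β, w, v => relate M α w v ∨ relate M β w v
  | .comp α β, w, v => ∃ u, relate M α w u ∧ relate M β u v
  | .star α, w, v => Relation.ReflTransGen (fun x y => relate M α x y) w v
end

/-- Relation interpreting a list of programs: composition, identity for `[]`. -/
def relateSeq {W : Type} (M : KripkeModel W) : List Program → W → W → Prop
  | [], v, w => v = w
  | α :: δ, v, w => ∃ u, relate M α v u ∧ relateSeq M δ u w

/-- Implication, defined from ¬ and ∧. -/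
def Formula.imp (φ ψ : Formula) : Formula := .neg (.and φ (.neg ψ))

/-- Disjunction, defined from ¬ and ∧. -/
def Formula.disj (φ ψ : Formula) : Formula := .neg (.and (.neg φ) (.neg ψ))

def semImplies (φ ψ : Formula) : Prop :=
  ∀ (W : Type) (M : KripkeModel W) (w : W), evaluate M w φ → evaluate M w ψ

def semEquiv (φ ψ : Formula) : Prop :=
  ∀ (W : Type) (M : KripkeModel W) (w : W), evaluate M w φ ↔ evaluate M w ψ

def valid (φ : Formula) : Prop :=
  ∀ (W : Type) (M : KripkeModel W) (w : W), evaluate M w φ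

mutual
/-- Uniform substitution on formulas. -/
def substF (σ : ℕ → Formula) : Formula → Formula
  | .bot => .bot
  | .atom p => σ p
  | .and φ ψ => .and (substF σ φ) (substF σ ψ)
  | .neg φ => .neg (substF σ φ)
  | .box α φ => .box (substP σ α) (substF σ φ)
/-- Uniform substitution on programs. -/
def substP (σ : ℕ → Formula) : Program → Program
  | .atom a => .atom a
  | .test τ => .test (substF σ τ)
  | .union α β => .union (substP σ α) (substP σ β)
  | .comp α β => .comp (substP σ α) (substP σ β)
  | .star α => .star (substP σ α)
end

/-- The substitution ρ/x mapping x to ρ and all other atoms to themselves. -/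
def substOne (x : ℕ) (ρ : Formula) : ℕ → Formula := fun p => if p = x then ρ else .atom p

mutual
/-- Occurrence of an atomic proposition in a formula. -/
def occursF (x : ℕ) : Formula → Prop
  | .bot => False
  | .atom p => p = x
  | .and φ ψ => occursF x φ ∨ occursF x ψ
  | .neg φ => occursF x φ
  | .box α φ => occursP x α ∨ occursF x φ
/-- Occurrence of an atomic proposition in a program (including inside tests). -/
def occursP (x : ℕ) : Program → Prop
  | .atom _ => False
  | .test τ => occursF x τ
  | .union α β => occursP x α ∨ occursP x β
  | .comp α β => occursP x α ∨ occursP x β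
  | .star α => occursP x α
end

mutual
/-- Vocabulary of a formula: atomic propositions (inl) and atomic programs (inr). -/
def vocF : Formula → Set (ℕ ⊕ ℕ)
  | .bot => ∅
  | .atom p => {Sum.inl p}
  | .and φ ψ => vocF φ ∪ vocF ψ
  | .neg φ => vocF φ
  | .box α φ => vocP α ∪ vocF φ
def vocP : Program → Set (ℕ ⊕ ℕ)
  | .atom a => {Sum.inr a}
  | .test τ => vocF τ
  | .union α β => vocP α ∪ vocP β
  | .comp α β => vocP α ∪ vocP β
  | .star α => vocP α
end

/-- Shallow tests of a program. -/
def TestsOf : Program → Set Formula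
  | .atom _ => ∅
  | .test τ => {τ}
  | .union α β => TestsOf α ∪ TestsOf β
  | .comp α β => TestsOf α ∪ TestsOf β
  | .star α => TestsOf α

/-- Shallow subprograms of a program. -/
def ProgsOf : Program → Set Program
  | .atom a => {.atom a}
  | .test τ => {.test τ}
  | .union α β => {.union α β} ∪ ProgsOf α ∪ ProgsOf β
  | .comp α β => {.comp α β} ∪ ProgsOf α ∪ ProgsOf β
  | .star α => {.star α} ∪ ProgsOf α

/-- Iterated boxes: □(δ̄, φ) = [δ₁]…[δₙ]φ. -/
def boxes : List Program → Formula → Formula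
  | [], φ => φ
  | α :: δ, φ => .box α (boxes δ φ)

/-- Test profiles of a program: subsets of its shallow tests. -/
def TP (α : Program) : Set (Set Formula) := {ℓ | ℓ ⊆ TestsOf α}

/-- The sets of program lists P^ℓ. -/
def Pfun (ℓ : Set Formula) : Program → Set (List Program)
  | .atom a => {[.atom a]}
  | .test τ => {l | l = [] ∧ τ ∈ ℓ}
  | .union α β => Pfun ℓ α ∪ Pfun ℓ β
  | .comp α β => {l | ∃ δ ∈ Pfun ℓ α, δ ≠ [] ∧ l = δ ++ [β]} ∪ {l | l ∈ Pfun ℓ β ∧ [] ∈ Pfun ℓ α}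
  | .star α => {[]} ∪ {l | ∃ δ ∈ Pfun ℓ α, δ ≠ [] ∧ l = δ ++ [.star α]}

/-- F^ℓ(α): negations of the failed tests. -/
def Ffun (ℓ : Set Formula) (α : Program) : Set Formula :=
  {φ | ∃ τ, τ ∈ TestsOf α ∧ τ ∉ ℓ ∧ φ = Formula.neg τ}

/-- X^ℓ_{α,ψ}. -/
def Xset (ℓ : Set Formula) (α : Program) (ψ : Formula) : Set Formula :=
  Ffun ℓ α ∪ {φ | ∃ δ ∈ Pfun ℓ α, φ = boxes δ ψ}

/-- unfold_□(α, ψ). -/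
def unfoldBox (α : Program) (ψ : Formula) : Set (Set Formula) :=
  {Γ | ∃ ℓ ∈ TP α, Γ = Xset ℓ α ψ}

/-- The function H for diamond unfolding. -/
def Hfun : Program → Set (Set Formula × List Program)
  | .atom a => {(∅, [.atom a])}
  | .test τ => {({τ}, [])}
  | .union α β => Hfun α ∪ Hfun β
  | .comp α β =>
      {p | (∃ X δ, (X, δ) ∈ Hfun α ∧ δ ≠ [] ∧ p = (X, δ ++ [β])) ∨
           (∃ X Y δ, (X, ([] : List Program)) ∈ Hfun α ∧ (Y, δ) ∈ Hfun β ∧ p = (X ∪ Y, δ))}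
  | .star α =>
      insert (∅, ([] : List Program))
        {p | ∃ X δ, (X, δ) ∈ Hfun α ∧ δ ≠ [] ∧ p = (X, δ ++ [Program.star α])}

/-- unfold_◇(α, ψ). -/
def unfoldDiamond (α : Program) (ψ : Formula) : Set (Set Formula) :=
  {Γ | ∃ p ∈ Hfun α, Γ = p.1 ∪ {Formula.neg (boxes p.2 ψ)}}

/-- Saturated sets of formulas. -/
def Saturated (Y : Set Formula) : Prop :=
  (∀ φ, Formula.neg (.neg φ) ∈ Y → φ ∈ Y) ∧
  (∀ φ ψ, Formula.and φ ψ ∈ Y → φ ∈ Y ∧ ψ ∈ Y) ∧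
  (∀ φ ψ, Formula.neg (.and φ ψ) ∈ Y → Formula.neg φ ∈ Y ∨ Formula.neg ψ ∈ Y) ∧
  (∀ α φ, Formula.box α φ ∈ Y → ∃ Δ ∈ unfoldBox α φ, Δ ⊆ Y) ∧
  (∀ α φ, Formula.neg (.box α φ) ∈ Y → ∃ Δ ∈ unfoldDiamond α φ, Δ ⊆ Y)

/-- Single negation. -/
def snegg : Formula → Formula
  | .neg φ => φ
  | φ => .neg φ

mutual
/-- Subformulas of a formula. -/
def subfF : Formula → Set Formula
  | .bot => {.bot}
  | .atom p => {.atom p}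
  | .and φ ψ => {.and φ ψ} ∪ subfF φ ∪ subfF ψ
  | .neg φ => {.neg φ} ∪ subfF φ
  | .box α φ => {.box α φ} ∪ subfP α ∪ subfF φ
/-- Formulas occurring in a program. -/
def subfP : Program → Set Formula
  | .atom _ => ∅
  | .test τ => subfF τ
  | .union α β => subfP α ∪ subfP β
  | .comp α β => subfP α ∪ subfP β
  | .star α => subfP α
end

/-- Fischer-Ladner closed sets. -/
def FLclosed (S : Set Formula) : Prop :=
  (∀ φ ∈ S, snegg φ ∈ S) ∧
  (∀ φ ∈ S, subfF φ ⊆ S) ∧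
  (∀ α β φ, Formula.box (.union α β) φ ∈ S → Formula.box α φ ∈ S ∧ Formula.box β φ ∈ S) ∧
  (∀ α β φ, Formula.box (.comp α β) φ ∈ S → Formula.box α (.box β φ) ∈ S) ∧
  (∀ α φ, Formula.box (.star α) φ ∈ S → Formula.box α (.box (.star α) φ) ∈ S)

/-- Fischer-Ladner closure: the smallest Fischer-Ladner closed superset. -/
def FL (X : Set Formula) : Set Formula := {φ | ∀ S, X ⊆ S → FLclosed S → φ ∈ S}

mutual
def lenF : Formula → ℕ
  | .bot => 1
  | .atom _ => 1
  | .and φ ψ => 1 + lenF φ + lenF ψ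
  | .neg φ => 1 + lenF φ
  | .box α φ => 1 + lenP α + lenF φ
/-- Length (size) of a program. -/
def lenP : Program → ℕ
  | .atom _ => 1
  | .test τ => 1 + lenF τ
  | .union α β => 1 + lenP α + lenP β
  | .comp α β => 1 + lenP α + lenP β
  | .star α => 1 + lenP α
end

/-- Sum of distances along a list of states (consecutive pairs). -/
noncomputable def listSum {W : Type} (d : W → W → ℕ∞) : List W → ℕ∞
  | [] => 0
  | [_] => 0
  | a :: b :: rest => d a b + listSum d (b :: rest)

open Classical in
/-- The α-distance between states. -/
noncomputable def distance {W : Type} (M : KripkeModel W) : Program → W → W → ℕ∞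
  | .atom a, v, w => if M.rel a v w then 1 else ⊤
  | .test τ, v, w => if v = w ∧ evaluate M v τ then 0 else ⊤
  | .union α β, v, w => min (distance M α v w) (distance M β v w)
  | .comp α β, v, w => ⨅ u, distance M α v u + distance M β u w
  | .star α, v, w =>
      ⨅ (l : List W) (_ : l.head? = some v ∧ l.getLast? = some w),
        listSum (fun x y => distance M α x y) l

open Classical in
/-- Distance along a list of programs. -/
noncomputable def distanceSeq {W : Type} (M : KripkeModel W) : List Program → W → W → ℕ∞
  | [], v, w => if v = w then 0 else ⊤
  | α :: δ, v, w => ⨅ u, distance M α v u + distanceSeq M δ u w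

/-- The relation Q_α on a type of "states" S carrying formula membership `mem`. -/
def Qprog {S : Type} (mem : Formula → S → Prop) (R : ℕ → S → S → Prop) : Program → S → S → Prop
  | .atom a => R a
  | .test τ => fun X Y => X = Y ∧ mem τ X
  | .union α β => fun X Y => Qprog mem R α X Y ∨ Qprog mem R β X Y
  | .comp α β => fun X Y => ∃ U, Qprog mem R α X U ∧ Qprog mem R β U Y
  | .star α => Relation.ReflTransGen (fun X Y => Qprog mem R α X Y)

/-- Q along a list of programs, with Id_W (restricted identity) for the empty list. -/
def Qseq {S : Type} (mem : Formula → S → Prop) (R : ℕ → S → S → Prop) (Wset : Set S) :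
    List Program → S → S → Prop
  | [] => fun Y Z => Y = Z ∧ Y ∈ Wset
  | α :: δ => fun Y Z => ∃ U, Qprog mem R α Y U ∧ Qseq mem R Wset δ U Z

/-- A model graph: a Kripke model whose states are locally consistent saturated sets. -/
structure ModelGraph (Wset : Set (Set Formula)) : Type where
  R : ℕ → ↥Wset → ↥Wset → Prop
  saturated : ∀ X : ↥Wset, Saturated X.val
  noBot : ∀ X : ↥Wset, Formula.bot ∉ X.val
  consistent : ∀ (X : ↥Wset) (p : ℕ),
    Formula.atom p ∈ X.val → Formula.neg (Formula.atom p) ∉ X.val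
  boxCond : ∀ (X Y : ↥Wset) (a : ℕ) (φ : Formula),
    R a X Y → Formula.box (.atom a) φ ∈ X.val → φ ∈ Y.val
  diaCond : ∀ (X : ↥Wset) (α : Program) (φ : Formula),
    Formula.neg (.box α φ) ∈ X.val →
      ∃ Y : ↥Wset, Qprog (fun τ Z => τ ∈ Z.val) R α X Y ∧ Formula.neg φ ∈ Y.val

/-- The Kripke model of a model graph; valuation: p holds at X iff p ∈ X. -/
def mgModel {Wset : Set (Set Formula)} (G : ModelGraph Wset) : KripkeModel ↥Wset :=
  ⟨G.R, fun X p => Formula.atom p ∈ X.val⟩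

/-!
Every list in `P^ℓ(α)` is built, by induction on `α`, from one list of a direct subprogram by
appending at most one further shallow subprogram, so it is empty or starts with an atomic program,
and all its entries are shallow subprograms of `α`. An entry of the tail is strictly shorter than
`α`, hence distinct from it, except the trailing `β*` appended when `α = β*`.
-/

theorem mem_progsOf_self (α : Program) : α ∈ ProgsOf α := by
  cases α <;> simp [ProgsOf]

theorem lenP_le_of_mem_progsOf : ∀ {α γ : Program}, γ ∈ ProgsOf α → lenP γ ≤ lenP α
  | .atom _, _, h | .test _, _, h => by simp_all [ProgsOf]
  | .union β₁ β₂, γ, h | .comp β₁ β₂, γ, h => by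
      simp only [ProgsOf, Set.mem_union, Set.mem_singleton_iff] at h
      rcases h with (rfl | h) | h
      · rfl
      all_goals
        have := lenP_le_of_mem_progsOf h
        simp only [lenP]
        omega
  | .star β, γ, h => by
      simp only [ProgsOf, Set.mem_union, Set.mem_singleton_iff] at h
      rcases h with rfl | h
      · rfl
      · have := lenP_le_of_mem_progsOf h
        simp only [lenP]
        omega

theorem eq_nil_or_eq_atom_cons_of_mem_Pfun {ℓ : Set Formula} :
    ∀ {α : Program} {δ : List Program}, δ ∈ Pfun ℓ α →
      δ = [] ∨ ∃ a l, δ = Program.atom a :: l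
  | .atom a, _, h => Or.inr ⟨a, [], h⟩
  | .test _, _, h => Or.inl h.1
  | .union _ _, _, h =>
      h.elim eq_nil_or_eq_atom_cons_of_mem_Pfun eq_nil_or_eq_atom_cons_of_mem_Pfun
  | .comp _ _, _, h => by
      rcases h with ⟨δ₁, h₁, hne, rfl⟩ | ⟨h, -⟩
      · obtain ⟨a, l, rfl⟩ := (eq_nil_or_eq_atom_cons_of_mem_Pfun h₁).resolve_left hne
        exact Or.inr ⟨a, l ++ _, rfl⟩
      · exact eq_nil_or_eq_atom_cons_of_mem_Pfun h
  | .star _, _, h => by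
      rcases h with h | ⟨δ₁, h₁, hne, rfl⟩
      · exact Or.inl h
      · obtain ⟨a, l, rfl⟩ := (eq_nil_or_eq_atom_cons_of_mem_Pfun h₁).resolve_left hne
        exact Or.inr ⟨a, l ++ _, rfl⟩

theorem mem_progsOf_of_mem_Pfun {ℓ : Set Formula} :
    ∀ {α γ : Program} {δ : List Program}, δ ∈ Pfun ℓ α → γ ∈ δ → γ ∈ ProgsOf α
  | .atom _, _, _, h, hγ => by simp_all [Pfun, ProgsOf]
  | .test _, _, _, h, hγ => by simp_all [Pfun]
  | .union _ _, _, _, h, hγ => by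
      rcases h with h | h <;> simp [ProgsOf, mem_progsOf_of_mem_Pfun h hγ]
  | .comp _ _, _, _, h, hγ => by
      rcases h with ⟨δ₁, h₁, -, rfl⟩ | ⟨h, -⟩
      · rcases List.mem_append.mp hγ with hγ | hγ
        · simp [ProgsOf, mem_progsOf_of_mem_Pfun h₁ hγ]
        · simp_all [ProgsOf, mem_progsOf_self]
      · simp [ProgsOf, mem_progsOf_of_mem_Pfun h hγ]
  | .star _, _, _, h, hγ => by
      rcases h with rfl | ⟨δ₁, h₁, -, rfl⟩
      · simp at hγ
      · rcases List.mem_append.mp hγ with hγ | hγ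
        · simp [ProgsOf, mem_progsOf_of_mem_Pfun h₁ hγ]
        · simp_all [ProgsOf]

theorem lenP_lt_of_mem_tail_Pfun {ℓ : Set Formula} {α γ : Program} {δ : List Program}
    (hα : ∀ β, α ≠ Program.star β) (hδ : δ ∈ Pfun ℓ α) (hγ : γ ∈ δ.tail) :
    lenP γ < lenP α := by
  have hle {β} {δ'} (h : δ' ∈ Pfun ℓ β) (hγ : γ ∈ δ') : lenP γ ≤ lenP β :=
    lenP_le_of_mem_progsOf (mem_progsOf_of_mem_Pfun h hγ)
  cases α with
  | atom => simp_all [Pfun]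
  | test => simp_all [Pfun]
  | union β₁ β₂ =>
      replace hγ := List.mem_of_mem_tail hγ
      have : lenP γ ≤ lenP β₁ ∨ lenP γ ≤ lenP β₂ := hδ.imp (hle · hγ) (hle · hγ)
      simp only [lenP]
      omega
  | comp β₁ β₂ =>
      replace hγ := List.mem_of_mem_tail hγ
      have : lenP γ ≤ lenP β₁ ∨ lenP γ ≤ lenP β₂ := by
        rcases hδ with ⟨δ₁, h₁, -, rfl⟩ | ⟨h, -⟩
        · rcases List.mem_append.mp hγ with hγ | hγ
          · exact Or.inl (hle h₁ hγ)
          · exact Or.inr (List.mem_singleton.mp hγ ▸ le_rfl)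
        · exact Or.inr (hle h hγ)
      simp only [lenP]
      omega
  | star β => exact absurd rfl (hα β)

theorem mem_Pfun_star {ℓ : Set Formula} {β : Program} {δ : List Program}
    (hδ : δ ∈ Pfun ℓ (Program.star β)) :
    δ = [] ∨ ∃ a l, δ = Program.atom a :: (l ++ [Program.star β]) ∧ ∀ γ ∈ l, γ ∈ ProgsOf β := by
  rcases hδ with h | ⟨δ₁, h₁, hne, rfl⟩
  · exact Or.inl h
  · obtain ⟨a, l, rfl⟩ := (eq_nil_or_eq_atom_cons_of_mem_Pfun h₁).resolve_left hne
    exact Or.inr ⟨a, l, rfl, fun γ hγ => mem_progsOf_of_mem_Pfun h₁ (List.mem_cons_of_mem _ hγ)⟩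

/-- Shape of unfolded boxes. -/
theorem boxHelperTermination (α : Program) (ℓ : Set Formula) (hℓ : ℓ ∈ TP α)
    (δ : List Program) (hδ : δ ∈ Pfun ℓ α) :
    (∀ a, α = Program.atom a → δ = [Program.atom a]) ∧
    (∀ β, α = Program.star β →
      δ = [] ∨ ∃ a l, δ = Program.atom a :: (l ++ [Program.star β]) ∧
        ∀ γ ∈ l, γ ∈ ProgsOf α ∧ γ ≠ α) ∧
    ((∀ a, α ≠ Program.atom a) → (∀ β, α ≠ Program.star β) →
      δ = [] ∨ ∃ a l, δ = Program.atom a :: l ∧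
        ∀ γ ∈ l, γ ∈ ProgsOf α ∧ γ ≠ α) := by
  refine ⟨fun a ha => ?_, fun β hβ => ?_, fun _ hα => ?_⟩
  · subst ha
    exact hδ
  · subst hβ
    refine (mem_Pfun_star hδ).imp_right fun ⟨a, l, hδ, hl⟩ => ⟨a, l, hδ, fun γ hγ => ?_⟩
    have hlt : lenP γ < lenP (.star β) := by
      have := lenP_le_of_mem_progsOf (hl γ hγ)
      simp only [lenP]
      omega
    exact ⟨Or.inr (hl γ hγ), ne_of_apply_ne lenP hlt.ne⟩
  · refine (eq_nil_or_eq_atom_cons_of_mem_Pfun hδ).imp_right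
      fun ⟨a, l, hδl⟩ => ⟨a, l, hδl, fun γ hγ => ⟨?_, ?_⟩⟩
    · exact mem_progsOf_of_mem_Pfun hδ (hδl ▸ List.mem_cons_of_mem _ hγ)
    · have hlt := lenP_lt_of_mem_tail_Pfun hα hδ (by simpa [hδl] using hγ)
      exact ne_of_apply_ne lenP hlt.ne
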